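/- (Continuous bias bound) Let M be an MDP with finite state space and action space ℝⁿ whose reward is L_r-Lipschitz in the action (in ℓ¹ norm) and whose transition kernel is L_p-Lipschitz in total variation in the action. Let v*_σ be the optimal value among Gaussian policies with fixed componentwise standard deviation σ ∈ ℝⁿ_{≥0}. Then ‖v* - v*_σ‖_∞ ≤ √(2/π) · ((1-γ)L_r + γ L_p R_max) ‖σ‖₁ / (1-γ)². -/

import Mathlib

/-!
Both value functions are fixed points of Bellman optimality operators: `v*` for `(r, P)` and
`v*_σ` for the Gaussian smoothings `(r_σ, P_σ)`. Averaging an `ℓ¹`-Lipschitz function over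
`N(a, σ)` moves it by at most the Lipschitz constant times the mean `ℓ¹` displacement
`κ = √(2/π) ‖σ‖₁`, so `|r - r_σ| ≤ L_r κ` and `‖P(·|s,a) - P_σ(·|s,a)‖₁ ≤ L_p κ`.
Comparing the two fixed points gives
`‖v* - v*_σ‖ ≤ L_r κ + γ (L_p κ ‖v*‖ + ‖v* - v*_σ‖)`; conclude with `‖v*‖ ≤ R_max / (1 - γ)`.
-/

open MeasureTheory ProbabilityTheory

/-- Product Gaussian measure on `ℝⁿ` with mean `a` and componentwise standard
deviation `σ`. -/
noncomputable def gaussPi {n : ℕ} (σ : Fin n → NNReal) (a : Fin n → ℝ) :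
    Measure (Fin n → ℝ) :=
  Measure.pi fun i => gaussianReal (a i) (σ i ^ 2)

open Real Set Function
open scoped NNReal

section Bellman

variable {S A : Type*} [Fintype S]

noncomputable def bellman (γ : ℝ) (r : S → A → ℝ) (P : S → A → S → ℝ) (v : S → ℝ) (s : S) : ℝ :=
  ⨆ a, r s a + γ * ∑ s', P s a s' * v s'

def IsStochastic (P : S → A → S → ℝ) : Prop :=
  ∀ s a, (∀ s', 0 ≤ P s a s') ∧ ∑ s', P s a s' = 1

lemma abs_sum_mul_le_sum_abs_mul_norm (d u : S → ℝ) :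
    |∑ s, d s * u s| ≤ (∑ s, |d s|) * ‖u‖ := by
  rw [Finset.sum_mul]
  refine (Finset.abs_sum_le_sum_abs _ _).trans (Finset.sum_le_sum fun s _ => ?_)
  rw [abs_mul]
  exact mul_le_mul_of_nonneg_left (norm_le_pi_norm u s) (abs_nonneg _)

lemma IsStochastic.abs_sum_mul_le_norm {P : S → A → S → ℝ} (hP : IsStochastic P) (s : S) (a : A)
    (u : S → ℝ) : |∑ s', P s a s' * u s'| ≤ ‖u‖ := by
  have hsum : ∑ s', |P s a s'| = 1 := by
    rw [← (hP s a).2]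
    exact Finset.sum_congr rfl fun s' _ => abs_of_nonneg ((hP s a).1 s')
  simpa [hsum] using abs_sum_mul_le_sum_abs_mul_norm (P s a) u

lemma IsStochastic.bddAbove_range_add {P : S → A → S → ℝ} (hP : IsStochastic P) {r : A → ℝ}
    (hr : BddAbove (range r)) (γ : ℝ) (s : S) (u : S → ℝ) :
    BddAbove (range fun a => r a + γ * ∑ s', P s a s' * u s') := by
  obtain ⟨R, hR⟩ := hr
  refine ⟨R + |γ| * ‖u‖, forall_mem_range.2 fun a => add_le_add (hR (mem_range_self a)) ?_⟩
  exact (le_abs_self _).trans <| by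
    rw [abs_mul]; exact mul_le_mul_of_nonneg_left (hP.abs_sum_mul_le_norm s a u) (abs_nonneg γ)

lemma abs_ciSup_sub_ciSup_le {ι : Type*} [Nonempty ι] {f g : ι → ℝ} {c : ℝ}
    (hf : BddAbove (range f)) (hg : BddAbove (range g)) (h : ∀ i, |f i - g i| ≤ c) :
    |(⨆ i, f i) - ⨆ i, g i| ≤ c := by
  refine abs_sub_le_iff.2 ⟨sub_le_iff_le_add'.2 (ciSup_le fun i => ?_),
    sub_le_iff_le_add'.2 (ciSup_le fun i => ?_)⟩
  · linarith [(abs_sub_le_iff.1 (h i)).1, le_ciSup hg i]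
  · linarith [(abs_sub_le_iff.1 (h i)).2, le_ciSup hf i]

variable [Nonempty A] {γ εr εp : ℝ} {r₁ r₂ : S → A → ℝ} {P₁ P₂ : S → A → S → ℝ}

lemma abs_bellman_sub_bellman_le (hγ : 0 ≤ γ) (hr₁ : ∀ s, BddAbove (range (r₁ s)))
    (hP₁ : IsStochastic P₁) (hP₂ : IsStochastic P₂) (hr : ∀ s a, |r₁ s a - r₂ s a| ≤ εr)
    (hP : ∀ s a, ∑ s', |P₁ s a s' - P₂ s a s'| ≤ εp) (u w : S → ℝ) (s : S) :
    |bellman γ r₁ P₁ u s - bellman γ r₂ P₂ w s| ≤ εr + γ * (εp * ‖u‖ + ‖u - w‖) := by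
  have hr₂ : BddAbove (range (r₂ s)) := by
    obtain ⟨R, hR⟩ := hr₁ s
    exact ⟨R + εr, forall_mem_range.2 fun a => by
      linarith [hR (mem_range_self a), (abs_sub_le_iff.1 (hr s a)).2]⟩
  refine abs_ciSup_sub_ciSup_le (hP₁.bddAbove_range_add (hr₁ s) γ s u)
    (hP₂.bddAbove_range_add hr₂ γ s w) fun a => ?_
  have hsplit : ∑ s', P₁ s a s' * u s' - ∑ s', P₂ s a s' * w s'
      = ∑ s', (P₁ s a s' - P₂ s a s') * u s' + ∑ s', P₂ s a s' * (u - w) s' := by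
    simp only [Pi.sub_apply, ← Finset.sum_sub_distrib, ← Finset.sum_add_distrib]
    exact Finset.sum_congr rfl fun _ _ => by ring
  have hdiff : |∑ s', P₁ s a s' * u s' - ∑ s', P₂ s a s' * w s'| ≤ εp * ‖u‖ + ‖u - w‖ := by
    rw [hsplit]
    refine (abs_add_le _ _).trans (add_le_add ?_ (hP₂.abs_sum_mul_le_norm s a _))
    exact (abs_sum_mul_le_sum_abs_mul_norm _ u).trans
      (mul_le_mul_of_nonneg_right (hP s a) (norm_nonneg u))
  calc |r₁ s a + γ * ∑ s', P₁ s a s' * u s' - (r₂ s a + γ * ∑ s', P₂ s a s' * w s')|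
      = |(r₁ s a - r₂ s a) + γ * (∑ s', P₁ s a s' * u s' - ∑ s', P₂ s a s' * w s')| := by
        ring_nf
    _ ≤ εr + γ * (εp * ‖u‖ + ‖u - w‖) := by
        refine (abs_add_le _ _).trans (add_le_add (hr s a) ?_)
        rw [abs_mul, abs_of_nonneg hγ]
        exact mul_le_mul_of_nonneg_left hdiff hγ

variable [Nonempty S] {v₁ v₂ : S → ℝ}

lemma one_sub_mul_norm_sub_le_of_isFixedPt_bellman (hγ : 0 ≤ γ)
    (hr₁ : ∀ s, BddAbove (range (r₁ s))) (hP₁ : IsStochastic P₁) (hP₂ : IsStochastic P₂)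
    (hr : ∀ s a, |r₁ s a - r₂ s a| ≤ εr) (hP : ∀ s a, ∑ s', |P₁ s a s' - P₂ s a s'| ≤ εp)
    (h₁ : IsFixedPt (bellman γ r₁ P₁) v₁) (h₂ : IsFixedPt (bellman γ r₂ P₂) v₂) :
    (1 - γ) * ‖v₁ - v₂‖ ≤ εr + γ * εp * ‖v₁‖ := by
  have h : ‖v₁ - v₂‖ ≤ εr + γ * (εp * ‖v₁‖ + ‖v₁ - v₂‖) := by
    refine (pi_norm_le_iff_of_nonempty _).2 fun s => ?_
    have := abs_bellman_sub_bellman_le hγ hr₁ hP₁ hP₂ hr hP v₁ v₂ s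
    rwa [h₁, h₂] at this
  linarith

lemma one_sub_mul_norm_le_of_isFixedPt_bellman {R : ℝ} {r : S → A → ℝ} {P : S → A → S → ℝ}
    {v : S → ℝ} (hγ : 0 ≤ γ) (hr : ∀ s a, |r s a| ≤ R) (hP : IsStochastic P)
    (hv : IsFixedPt (bellman γ r P) v) : (1 - γ) * ‖v‖ ≤ R := by
  -- compare with the zero-reward problem, whose value function is `0`
  have h₀ : IsFixedPt (bellman γ 0 P) 0 := funext fun s => by simp [bellman]
  simpa using one_sub_mul_norm_sub_le_of_isFixedPt_bellman hγ
    (fun s => ⟨R, forall_mem_range.2 fun a => (le_abs_self _).trans (hr s a)⟩) hP hP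
    (εp := 0) (fun s a => by simpa using hr s a) (fun s a => by simp) hv h₀

lemma norm_sub_le_of_isFixedPt_bellman {R : ℝ} (hγ0 : 0 ≤ γ) (hγ1 : γ < 1)
    (hR : ∀ s a, |r₁ s a| ≤ R) (hP₁ : IsStochastic P₁) (hP₂ : IsStochastic P₂)
    (hr : ∀ s a, |r₁ s a - r₂ s a| ≤ εr) (hP : ∀ s a, ∑ s', |P₁ s a s' - P₂ s a s'| ≤ εp)
    (h₁ : IsFixedPt (bellman γ r₁ P₁) v₁) (h₂ : IsFixedPt (bellman γ r₂ P₂) v₂) :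
    ‖v₁ - v₂‖ ≤ ((1 - γ) * εr + γ * εp * R) / (1 - γ) ^ 2 := by
  have hεp : 0 ≤ εp := (Finset.sum_nonneg fun _ _ => abs_nonneg _).trans
    (hP (Classical.arbitrary S) (Classical.arbitrary A))
  have hdiff := one_sub_mul_norm_sub_le_of_isFixedPt_bellman hγ0
    (fun s => ⟨R, forall_mem_range.2 fun a => (le_abs_self _).trans (hR s a)⟩) hP₁ hP₂ hr hP h₁ h₂
  have hnorm := one_sub_mul_norm_le_of_isFixedPt_bellman hγ0 hR hP₁ h₁
  rw [le_div_iff₀ (by nlinarith)]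
  nlinarith [mul_le_mul_of_nonneg_left hnorm (mul_nonneg hγ0 hεp)]

end Bellman

section Smoothing

variable {α : Type*} [MeasurableSpace α]

lemma IsStochastic.integral {S A : Type*} [Fintype S] {P : S → α → S → ℝ} (hP : IsStochastic P)
    (hm : ∀ s s', Measurable fun x => P s x s') (μ : A → Measure α)
    [∀ a, IsProbabilityMeasure (μ a)] : IsStochastic fun s a s' => ∫ x, P s x s' ∂μ a := by
  intro s a
  have hle : ∀ x s', ‖P s x s'‖ ≤ 1 := fun x s' => by
    rw [Real.norm_of_nonneg ((hP s x).1 s'), ← (hP s x).2]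
    exact Finset.single_le_sum (fun t _ => (hP s x).1 t) (Finset.mem_univ s')
  have hint : ∀ s', Integrable (fun x => P s x s') (μ a) := fun s' =>
    .of_bound (hm s s').aestronglyMeasurable 1 (ae_of_all _ fun x => hle x s')
  refine ⟨fun s' => integral_nonneg fun x => (hP s x).1 s', ?_⟩
  rw [← integral_finsetSum _ fun s' _ => hint s']
  simp [(hP s _).2]

lemma sum_abs_sub_integral_le_of_sum_abs_sub_le {μ : Measure α} [IsProbabilityMeasure μ]
    {ι : Type*} [Fintype ι] {f : α → ι → ℝ} {c : ι → ℝ} {d : α → ℝ} {L : ℝ} (hf : ∀ i, AEStronglyMeasurable (fun x => f x i) μ)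
    (hd : Integrable d μ) (h : ∀ x, ∑ i, |f x i - c i| ≤ L * d x) :
    ∑ i, |c i - ∫ x, f x i ∂μ| ≤ L * ∫ x, d x ∂μ := by
  have hint : ∀ i, Integrable (fun x => f x i - c i) μ := fun i =>
    (hd.const_mul L).mono' ((hf i).sub aestronglyMeasurable_const) (ae_of_all _ fun x =>
      (Finset.single_le_sum (f := fun j => |f x j - c j|) (fun j _ => abs_nonneg _)
        (Finset.mem_univ i)).trans (h x))
  have hfi : ∀ i, Integrable (fun x => f x i) μ := fun i =>
    ((hint i).add (integrable_const (c i))).congr (.of_forall fun x => by simp)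
  calc ∑ i, |c i - ∫ x, f x i ∂μ| = ∑ i, |∫ x, f x i - c i ∂μ| :=
        Finset.sum_congr rfl fun i _ => by
          rw [abs_sub_comm, integral_sub (hfi i) (integrable_const _), integral_const,
            probReal_univ, one_smul]
    _ ≤ ∑ i, ∫ x, |f x i - c i| ∂μ := Finset.sum_le_sum fun i _ => abs_integral_le_integral_abs
    _ = ∫ x, ∑ i, |f x i - c i| ∂μ := (integral_finsetSum _ fun i _ => (hint i).abs).symm
    _ ≤ ∫ x, L * d x ∂μ :=
        integral_mono (integrable_finsetSum _ fun i _ => (hint i).abs) (hd.const_mul L) h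
    _ = L * ∫ x, d x ∂μ := integral_const_mul L _

end Smoothing

lemma continuous_of_abs_sub_le_mul_sum_abs_sub {n : ℕ} {f : (Fin n → ℝ) → ℝ} {L : ℝ}
    (h : ∀ x y, |f x - f y| ≤ L * ∑ i, |x i - y i|) : Continuous f := by
  refine (LipschitzWith.of_dist_le_mul (K := L.toNNReal * n) fun x y => ?_).continuous
  calc dist (f x) (f y) ≤ L * ∑ i, |x i - y i| := h x y
    _ ≤ L.toNNReal * ∑ _i : Fin n, dist x y :=
        mul_le_mul (Real.le_coe_toNNReal L) (Finset.sum_le_sum fun i _ => dist_le_pi_dist x y i)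
          (Finset.sum_nonneg fun _ _ => abs_nonneg _) (NNReal.coe_nonneg _)
    _ = (L.toNNReal * n : ℝ≥0) * dist x y := by simp [mul_assoc]

lemma continuous_apply_of_sum_abs_sub_le {n : ℕ} {ι : Type*} [Fintype ι]
    {f : (Fin n → ℝ) → ι → ℝ} {L : ℝ} (h : ∀ x y, ∑ i, |f x i - f y i| ≤ L * ∑ j, |x j - y j|)
    (i : ι) : Continuous fun x => f x i :=
  continuous_of_abs_sub_le_mul_sum_abs_sub fun x y =>
    (Finset.single_le_sum (f := fun i => |f x i - f y i|) (fun _ _ => abs_nonneg _)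
      (Finset.mem_univ i)).trans (h x y)

section Gaussian

lemma integral_Ioi_mul_exp_neg_mul_sq {b : ℝ} (hb : 0 < b) :
    ∫ x in Ioi (0 : ℝ), x * exp (-b * x ^ 2) = (2 * b)⁻¹ := by
  have h := integral_mul_cexp_neg_mul_sq (b := (b : ℂ)) (by simpa using hb)
  norm_cast at h

lemma integral_abs_mul_exp_neg_mul_sq {b : ℝ} (hb : 0 < b) :
    ∫ x, |x| * exp (-b * x ^ 2) = b⁻¹ := by
  have h := integral_comp_abs (f := fun x => x * exp (-b * x ^ 2))
  simp only [sq_abs] at h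
  rw [h, integral_Ioi_mul_exp_neg_mul_sq hb]
  field_simp

lemma integral_abs_gaussianReal_zero (v : ℝ≥0) :
    ∫ x, |x| ∂gaussianReal 0 v = √(2 / π) * √v := by
  rcases eq_or_ne v 0 with rfl | hv
  · simp [gaussianReal_zero_var]
  have hv' : (0 : ℝ) < v := by positivity
  rw [integral_gaussianReal_eq_integral_smul hv]
  simp only [gaussianPDFReal, sub_zero, smul_eq_mul]
  have : ∀ x : ℝ, (√(2 * π * v))⁻¹ * exp (-x ^ 2 / (2 * v)) * |x|
      = (√(2 * π * v))⁻¹ * (|x| * exp (-(2 * v : ℝ)⁻¹ * x ^ 2)) := fun x => by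
    ring_nf
  simp_rw [this]
  rw [integral_const_mul, integral_abs_mul_exp_neg_mul_sq (by positivity), sqrt_div' _ pi_pos.le,
    sqrt_mul' _ hv'.le, sqrt_mul' _ pi_pos.le]
  field_simp
  rw [sq_sqrt hv'.le, sq_sqrt zero_le_two]

lemma integral_abs_sub_gaussianReal (m : ℝ) (v : ℝ≥0) :
    ∫ x, |x - m| ∂gaussianReal m v = √(2 / π) * √v := by
  rw [← integral_abs_gaussianReal_zero, ← sub_self m, ← gaussianReal_map_sub_const m,
    integral_map (by fun_prop) (by fun_prop)]

lemma integrable_abs_sub_gaussianReal (m : ℝ) (v : ℝ≥0) :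
    Integrable (fun x => |x - m|) (gaussianReal m v) :=
  ((memLp_id_gaussianReal 1).integrable le_rfl |>.sub (integrable_const m)).abs

variable {n : ℕ} (σ : Fin n → ℝ≥0) (a : Fin n → ℝ)

instance : IsProbabilityMeasure (gaussPi σ a) := by
  unfold gaussPi; infer_instance

lemma integrable_abs_sub_gaussPi (i : Fin n) :
    Integrable (fun x => |x i - a i|) (gaussPi σ a) :=
  integrable_comp_eval (μ := fun j => gaussianReal (a j) (σ j ^ 2))
    (integrable_abs_sub_gaussianReal (a i) _)

lemma integral_abs_sub_gaussPi (i : Fin n) :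
    ∫ x, |x i - a i| ∂gaussPi σ a = √(2 / π) * σ i := by
  rw [gaussPi, integral_comp_eval (μ := fun j => gaussianReal (a j) (σ j ^ 2))
    (f := fun y => |y - a i|) (by fun_prop), integral_abs_sub_gaussianReal, NNReal.coe_pow,
    sqrt_sq (σ i).coe_nonneg]

lemma integrable_sum_abs_sub_gaussPi : Integrable (fun x => ∑ i, |x i - a i|) (gaussPi σ a) :=
  integrable_finsetSum _ fun i _ => integrable_abs_sub_gaussPi σ a i

lemma integral_sum_abs_sub_gaussPi :
    ∫ x, ∑ i, |x i - a i| ∂gaussPi σ a = √(2 / π) * ∑ i, (σ i : ℝ) := by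
  rw [integral_finsetSum _ fun i _ => integrable_abs_sub_gaussPi σ a i, Finset.mul_sum]
  exact Finset.sum_congr rfl fun i _ => integral_abs_sub_gaussPi σ a i

lemma sum_abs_sub_integral_gaussPi_le {ι : Type*} [Fintype ι] {f : (Fin n → ℝ) → ι → ℝ} {L : ℝ}
    (h : ∀ x y, ∑ i, |f x i - f y i| ≤ L * ∑ j, |x j - y j|) :
    ∑ i, |f a i - ∫ x, f x i ∂gaussPi σ a| ≤ L * (√(2 / π) * ∑ j, (σ j : ℝ)) := by
  rw [← integral_sum_abs_sub_gaussPi]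
  exact sum_abs_sub_integral_le_of_sum_abs_sub_le
    (fun i => (continuous_apply_of_sum_abs_sub_le h i).aestronglyMeasurable)
    (integrable_sum_abs_sub_gaussPi σ a) fun x => h x a

lemma abs_sub_integral_gaussPi_le {f : (Fin n → ℝ) → ℝ} {L : ℝ}
    (h : ∀ x y, |f x - f y| ≤ L * ∑ j, |x j - y j|) :
    |f a - ∫ x, f x ∂gaussPi σ a| ≤ L * (√(2 / π) * ∑ j, (σ j : ℝ)) := by
  simpa using sum_abs_sub_integral_gaussPi_le σ a (ι := Unit) (f := fun x _ => f x)
    (by simpa using h)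

end Gaussian

theorem continuous_bias_bound_general
    {S : Type*} [Fintype S] [Nonempty S] (n : ℕ)
    (γ Rmax Lr Lp : ℝ) (hγ0 : 0 ≤ γ) (hγ1 : γ < 1)
    (σ : Fin n → NNReal)
    (r : S → (Fin n → ℝ) → ℝ) (P : S → (Fin n → ℝ) → S → ℝ)
    (hr : ∀ s a, r s a ∈ Set.Icc 0 Rmax)
    (hP : ∀ s a, (∀ s', 0 ≤ P s a s') ∧ ∑ s', P s a s' = 1)
    (hLipr : ∀ s a₁ a₂, |r s a₁ - r s a₂| ≤ Lr * ∑ i, |a₁ i - a₂ i|)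
    (hLipP : ∀ s a₁ a₂, ∑ s', |P s a₁ s' - P s a₂ s'| ≤ Lp * ∑ i, |a₁ i - a₂ i|)
    (vstar vσ : S → ℝ)
    (hstar : ∀ s, vstar s = ⨆ a : Fin n → ℝ, (r s a + γ * ∑ s', P s a s' * vstar s'))
    (hσfix : ∀ s, vσ s = ⨆ a : Fin n → ℝ,
      ((∫ a', r s a' ∂(gaussPi σ a)) +
        γ * ∑ s', (∫ a', P s a' s' ∂(gaussPi σ a)) * vσ s')) :
    ‖vstar - vσ‖ ≤
      Real.sqrt (2 / Real.pi) * ((1 - γ) * Lr + γ * Lp * Rmax)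
        * (∑ i, (σ i : ℝ)) / (1 - γ) ^ 2 := by
  have hPσ : IsStochastic fun s a s' => ∫ a', P s a' s' ∂gaussPi σ a :=
    IsStochastic.integral hP
      (fun s s' => (continuous_apply_of_sum_abs_sub_le (hLipP s) s').measurable) (gaussPi σ)
  calc ‖vstar - vσ‖
      ≤ ((1 - γ) * (Lr * (√(2 / π) * ∑ i, (σ i : ℝ)))
          + γ * (Lp * (√(2 / π) * ∑ i, (σ i : ℝ))) * Rmax) / (1 - γ) ^ 2 :=
        norm_sub_le_of_isFixedPt_bellman hγ0 hγ1
          (fun s a => (abs_of_nonneg (hr s a).1).trans_le (hr s a).2) hP hPσ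
          (fun s a => abs_sub_integral_gaussPi_le σ a (hLipr s))
          (fun s a => sum_abs_sub_integral_gaussPi_le σ a (hLipP s))
          (funext fun s => (hstar s).symm) (funext fun s => (hσfix s).symm)
    _ = _ := by ring

/-- Continuous bias bound. For an MDP with finite states and
actions in `ℝⁿ` whose reward is `L_r`-Lipschitz (ℓ¹) and transitions
`L_p`-Lipschitz in TV, with rewards in `[0, R_max]`, the optimal value `v*` and
the optimal value `v*_σ` among Gaussian policies with std `σ` satisfy
`‖v* - v*_σ‖ ≤ √(2/π) · ((1-γ)L_r + γ L_p R_max) ‖σ‖₁ / (1-γ)²`. -/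
theorem continuous_bias_bound
    {S : Type*} [Fintype S] [Nonempty S] (n : ℕ)
    (γ Rmax Lr Lp : ℝ) (hγ0 : 0 ≤ γ) (hγ1 : γ < 1) (hLr : 0 ≤ Lr) (hLp : 0 ≤ Lp)
    (σ : Fin n → NNReal)
    (r : S → (Fin n → ℝ) → ℝ) (P : S → (Fin n → ℝ) → S → ℝ)
    (hr : ∀ s a, r s a ∈ Set.Icc 0 Rmax)
    (hP : ∀ s a, (∀ s', 0 ≤ P s a s') ∧ ∑ s', P s a s' = 1)
    (hLipr : ∀ s a₁ a₂, |r s a₁ - r s a₂| ≤ Lr * ∑ i, |a₁ i - a₂ i|)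
    (hLipP : ∀ s a₁ a₂, ∑ s', |P s a₁ s' - P s a₂ s'| ≤ Lp * ∑ i, |a₁ i - a₂ i|)
    (vstar vσ : S → ℝ)
    (hstar : ∀ s, vstar s = ⨆ a : Fin n → ℝ, (r s a + γ * ∑ s', P s a s' * vstar s'))
    (hσfix : ∀ s, vσ s = ⨆ a : Fin n → ℝ,
      ((∫ a', r s a' ∂(gaussPi σ a)) +
        γ * ∑ s', (∫ a', P s a' s' ∂(gaussPi σ a)) * vσ s')) :
    ‖vstar - vσ‖ ≤
      Real.sqrt (2 / Real.pi) * ((1 - γ) * Lr + γ * Lp * Rmax)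
        * (∑ i, (σ i : ℝ)) / (1 - γ) ^ 2 :=
  continuous_bias_bound_general n γ Rmax Lr Lp hγ0 hγ1 σ r P hr hP hLipr hLipP vstar vσ hstar hσfix
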